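/- arXiv:1202.1302 — 5 statements merged into one kernel-verified Lean document; each statement's English description precedes it below -/
import Mathlib

section
/- Let m be a positive measure on ℝ, let 0 < S₀ < K be real numbers and set z = log(K/S₀) > 0. Then, as an identity in [0, ∞], ∫_ℝ (S₀ e^y − K)⁺ m(dy) = S₀ ∫_z^∞ e^x m([x, ∞)) dx. -/
open MeasureTheory
open scoped ENNReal
open Set Real

/-!
By the layer-cake formula the left side is `∫_0^∞ m{payoff ≥ t} dt`. Substituting
`t = S₀ eˣ − K`, which maps `(z, ∞)` increasingly onto `(0, ∞)` with `dt = S₀ eˣ dx`,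
turns the superlevel set `{payoff ≥ t}` into the half-line `[x, ∞)`. Going through the
layer-cake formula rather than Tonelli avoids any σ-finiteness assumption on `m`.
-/

section CallPayoff

variable {a : ℝ}

lemma image_mul_exp_sub_Ioi (ha : 0 < a) (z : ℝ) :
    (fun x => a * exp x - a * exp z) '' Ioi z = Ioi 0 := by
  have hcomp : (fun x => a * exp x - a * exp z) = (· - a * exp z) ∘ (a * ·) ∘ exp := rfl
  rw [hcomp, image_comp, image_comp, image_exp_Ioi, image_mul_left_Ioi ha]
  simp

lemma setOf_le_max_mul_exp_sub (ha : 0 < a) {x z : ℝ} (hx : z < x) :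
    {y | a * exp x - a * exp z ≤ max (a * exp y - a * exp z) 0} = Ici x := by
  have hpos : 0 < a * exp x - a * exp z := by
    have := exp_lt_exp.2 hx
    nlinarith
  ext y
  simp [hpos.not_ge, ha]

theorem lintegral_max_mul_exp_sub (m : Measure ℝ) (ha : 0 < a) (z : ℝ) :
    ∫⁻ y, ENNReal.ofReal (max (a * exp y - a * exp z) 0) ∂m =
      ENNReal.ofReal a * ∫⁻ x in Ioi z, ENNReal.ofReal (exp x) * m (Ici x) := by
  have hderiv (x : ℝ) : HasDerivAt (fun x => a * exp x - a * exp z) (a * exp x) x :=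
    ((hasDerivAt_exp x).const_mul a).sub_const _
  have hinj : StrictMono (fun x => a * exp x - a * exp z) := fun x y hxy => by
    simpa [ha] using exp_lt_exp.2 hxy
  rw [lintegral_eq_lintegral_meas_le (f := fun y => max (a * exp y - a * exp z) 0) m
      (ae_of_all _ fun y => le_max_right _ _) (by fun_prop),
    ← image_mul_exp_sub_Ioi ha z,
    lintegral_image_eq_lintegral_abs_deriv_mul measurableSet_Ioi
      (fun x _ => (hderiv x).hasDerivWithinAt) hinj.injective.injOn,
    ← lintegral_const_mul' _ _ ENNReal.ofReal_ne_top]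
  refine setLIntegral_congr_fun measurableSet_Ioi fun x hx => ?_
  rw [setOf_le_max_mul_exp_sub ha hx, abs_of_pos (by positivity), ENNReal.ofReal_mul ha.le,
    mul_assoc]

end CallPayoff

/-- For a positive measure `m` on `ℝ`, `0 < S₀ < K` and
`z = log(K/S₀)`, one has, as an identity in `[0,∞]`,
`∫ (S₀ e^y − K)⁺ m(dy) = S₀ ∫_z^∞ e^x m([x,∞)) dx`. -/
theorem lintegral_call_payoff_eq_exponential_double_tail
    (m : Measure ℝ) (S0 K : ℝ) (hS0 : 0 < S0) (hK : S0 < K) :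
    ∫⁻ y, ENNReal.ofReal (max (S0 * Real.exp y - K) 0) ∂m =
      ENNReal.ofReal S0 *
        ∫⁻ x in Set.Ioi (Real.log (K / S0)),
          ENNReal.ofReal (Real.exp x) * m (Set.Ici x) := by
  have hstrike : S0 * exp (log (K / S0)) = K := by
    rw [exp_log (div_pos (hS0.trans hK) hS0), mul_div_cancel₀ _ hS0.ne']
  simpa only [hstrike] using lintegral_max_mul_exp_sub m hS0 (log (K / S0))
end

section
/- For all real numbers x ≥ 0, s ≥ 0 and y ∈ ℝ, |(x e^y − s)⁺ − (x − s)⁺ − (s e^y − s)⁺| ≤ (x + s) |e^y − 1|. -/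
/-- For all `x ≥ 0`, `s ≥ 0` and `y ∈ ℝ`,
`|(x e^y − s)⁺ − (x − s)⁺ − (s e^y − s)⁺| ≤ (x + s) |e^y − 1|`. -/
theorem abs_posPart_jump_decomposition_le
    (x s y : ℝ) (hx : 0 ≤ x) (hs : 0 ≤ s) :
    |max (x * Real.exp y - s) 0 - max (x - s) 0 - max (s * Real.exp y - s) 0| ≤
      (x + s) * |Real.exp y - 1| := by
  have h1 : |max (x * Real.exp y - s) 0 - max (x - s) 0| ≤ x * |Real.exp y - 1| := by
    calc |max (x * Real.exp y - s) 0 - max (x - s) 0|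
        ≤ |(x * Real.exp y - s) - (x - s)| := abs_max_sub_max_le_abs _ _ _
      _ = |x * (Real.exp y - 1)| := by ring_nf
      _ = x * |Real.exp y - 1| := by rw [abs_mul, abs_of_nonneg hx]
  have h2 : |max (s * Real.exp y - s) 0| ≤ s * |Real.exp y - 1| := by
    rw [abs_of_nonneg (le_max_right _ _)]
    calc max (s * Real.exp y - s) 0 ≤ |s * Real.exp y - s| := max_le (le_abs_self _) (abs_nonneg _)
      _ = s * |Real.exp y - 1| := by rw [show s * Real.exp y - s = s * (Real.exp y - 1) by ring, abs_mul, abs_of_nonneg hs]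
  calc |max (x * Real.exp y - s) 0 - max (x - s) 0 - max (s * Real.exp y - s) 0|
      ≤ |max (x * Real.exp y - s) 0 - max (x - s) 0| + |max (s * Real.exp y - s) 0| := abs_sub _ _
    _ ≤ x * |Real.exp y - 1| + s * |Real.exp y - 1| := add_le_add h1 h2
    _ = (x + s) * |Real.exp y - 1| := by ring
end

section
/- Let T > 0, let (S_t)_{t ∈ (0, T]} be a family of nonnegative square-integrable real random variables on a probability space, let 0 < S₀ < K be real numbers, and let n be a positive integer with n ≥ 2/(K − S₀). Let f : ℝ → ℝ be a measurable function such that (x − K)⁺ ≤ f(x) ≤ (x − K)⁺ + 1/n for all x ∈ ℝ and f(x) = (x − K)⁺ whenever |x − K| > 1/n. Suppose that (1/t)(E[f(S_t)] − f(S₀)) → A and (1/t) E[(S_t − S₀)²] → Q as t → 0⁺, for some real numbers A and Q. Then A − (4 Q)/(n (K − S₀)²) ≤ liminf_{t → 0⁺} (1/t) E[(S_t − K)⁺] ≤ limsup_{t → 0⁺} (1/t) E[(S_t − K)⁺] ≤ A. -/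
open MeasureTheory Filter Topology

/-! Squeezing `f` between the call payoff and the payoff plus the band width `1/n`, the upper
bound `E[(S_t - K)⁺] ≤ E[f(S_t)]` is immediate. For the lower bound, on the band
`|x - K| ≤ 1/n` the point `x` is at least `(K - S₀)/2` away from `S₀`, so the excess `1/n`
of `f` over the payoff is dominated by `4 (x - S₀)² / (n (K - S₀)²)`; taking expectations,
dividing by `t` and passing to the limit costs exactly `4Q / (n (K - S₀)²)`. -/

theorem le_liminf_and_liminf_le_limsup_and_limsup_le_of_tendsto {α : Type*} {l : Filter α}
    [l.NeBot] {g L U : α → ℝ} {A B : ℝ} (hL : Tendsto L l (𝓝 B)) (hU : Tendsto U l (𝓝 A))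
    (hLg : ∀ᶠ x in l, L x ≤ g x) (hgU : ∀ᶠ x in l, g x ≤ U x) :
    B ≤ liminf g l ∧ liminf g l ≤ limsup g l ∧ limsup g l ≤ A := by
  have hg_above : IsBoundedUnder (· ≤ ·) l g := by
    refine isBoundedUnder_of_eventually_le (a := A + 1) ?_
    filter_upwards [hgU, hU.eventually (eventually_le_nhds (lt_add_one A))] with x h₁ h₂
    exact h₁.trans h₂
  have hg_below : IsBoundedUnder (· ≥ ·) l g := by
    refine isBoundedUnder_of_eventually_ge (a := B - 1) ?_
    filter_upwards [hLg, hL.eventually (eventually_ge_nhds (sub_one_lt B))] with x h₁ h₂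
    exact h₂.trans h₁
  refine ⟨?_, liminf_le_limsup hg_above hg_below, ?_⟩
  · rw [← hL.liminf_eq]
    exact liminf_le_liminf hLg hL.isBoundedUnder_ge hg_above.isCoboundedUnder_ge
  · rw [← hU.limsup_eq]
    exact limsup_le_limsup hgU hg_below.isCoboundedUnder_le hU.isBoundedUnder_le

theorem sq_sub_div_four_le_sq_of_abs_sub_le {a K x δ : ℝ} (hδ : 2 * δ ≤ K - a)
    (hx : |x - K| ≤ δ) : (K - a) ^ 2 / 4 ≤ (x - a) ^ 2 := by
  have hKa : 0 ≤ K - a := by linarith [abs_nonneg (x - K)]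
  have hdist : (K - a) / 2 ≤ |x - a| := by
    have := abs_sub (x - a) (x - K)
    rw [show x - a - (x - K) = K - a by ring, abs_of_nonneg hKa] at this
    linarith
  calc (K - a) ^ 2 / 4 = ((K - a) / 2) ^ 2 := by ring
    _ ≤ |x - a| ^ 2 := pow_le_pow_left₀ (by linarith) hdist 2
    _ = (x - a) ^ 2 := sq_abs _

theorem le_add_mul_sq_of_eq_off_band {φ f : ℝ → ℝ} {a K δ : ℝ} (hδ₀ : 0 < δ)
    (hδ : 2 * δ ≤ K - a) (hle : ∀ x, f x ≤ φ x + δ) (heq : ∀ x, |x - K| > δ → f x = φ x)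
    (x : ℝ) : f x ≤ φ x + 4 * δ / (K - a) ^ 2 * (x - a) ^ 2 := by
  by_cases hx : |x - K| > δ
  · rw [heq x hx]
    have : 0 ≤ 4 * δ / (K - a) ^ 2 * (x - a) ^ 2 := by positivity
    linarith
  · have hKa : 0 < K - a := by linarith
    have hsq := sq_sub_div_four_le_sq_of_abs_sub_le hδ (not_lt.mp hx)
    have hδ_le : δ ≤ 4 * δ / (K - a) ^ 2 * (x - a) ^ 2 := by
      calc δ = 4 * δ / (K - a) ^ 2 * ((K - a) ^ 2 / 4) := by field_simp
        _ ≤ 4 * δ / (K - a) ^ 2 * (x - a) ^ 2 := by gcongr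
    linarith [hle x]

section Integrals

variable {Ω : Type*} [MeasurableSpace Ω] {P : Measure Ω} [IsFiniteMeasure P] {X : Ω → ℝ}
  {f : ℝ → ℝ} {K : ℝ}

theorem integrable_comp_of_call_le_of_le_call_add {δ : ℝ} (hf : Measurable f)
    (hX : Integrable X P) (hge : ∀ x, max (x - K) 0 ≤ f x)
    (hle : ∀ x, f x ≤ max (x - K) 0 + δ) : Integrable (fun ω => f (X ω)) P := by
  refine Integrable.mono' ((hX.sub (integrable_const K)).pos_part.add (integrable_const δ))
    (hf.comp_aemeasurable hX.aemeasurable).aestronglyMeasurable (ae_of_all _ fun ω => ?_)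
  rw [Real.norm_eq_abs, abs_of_nonneg ((le_max_right _ _).trans (hge _))]
  exact hle (X ω)

theorem integral_call_le_integral_comp (hX : Integrable X P)
    (hf : Integrable (fun ω => f (X ω)) P) (hge : ∀ x, max (x - K) 0 ≤ f x) :
    ∫ ω, max (X ω - K) 0 ∂P ≤ ∫ ω, f (X ω) ∂P :=
  integral_mono (hX.sub (integrable_const K)).pos_part hf fun ω => hge (X ω)

theorem integral_comp_le_integral_call_add_mul_integral_sq {a c : ℝ} (hX : MemLp X 2 P)
    (hf : Integrable (fun ω => f (X ω)) P)
    (hle : ∀ x, f x ≤ max (x - K) 0 + c * (x - a) ^ 2) :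
    ∫ ω, f (X ω) ∂P ≤ ∫ ω, max (X ω - K) 0 ∂P + c * ∫ ω, (X ω - a) ^ 2 ∂P := by
  have hcall : Integrable (fun ω => max (X ω - K) 0) P :=
    ((hX.integrable one_le_two).sub (integrable_const K)).pos_part
  have hsq : Integrable (fun ω => (X ω - a) ^ 2) P := (hX.sub (memLp_const a)).integrable_sq
  rw [← integral_const_mul, ← integral_add hcall (hsq.const_mul c)]
  exact integral_mono hf (hcall.add (hsq.const_mul c)) fun ω => hle (X ω)

end Integrals

theorem liminf_limsup_call_sandwich_general
    {Ω : Type*} [MeasurableSpace Ω] (P : Measure Ω) [IsProbabilityMeasure P]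
    {T : ℝ} (hT : 0 < T) (S : ℝ → Ω → ℝ) (S0 K : ℝ) (hK : S0 < K)
    (hS_L2 : ∀ t ∈ Set.Ioc (0:ℝ) T, MemLp (S t) 2 P)
    (n : ℕ) (hn2 : 2 / (K - S0) ≤ (n : ℝ))
    (f : ℝ → ℝ) (hf_meas : Measurable f)
    (hf_ge : ∀ x, max (x - K) 0 ≤ f x)
    (hf_le : ∀ x, f x ≤ max (x - K) 0 + 1 / n)
    (hf_eq : ∀ x, |x - K| > 1 / n → f x = max (x - K) 0)
    (A Q : ℝ)
    (hA : Tendsto (fun t => ((∫ ω, f (S t ω) ∂P) - f S0) / t) (𝓝[>] 0) (𝓝 A))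
    (hQ : Tendsto (fun t => (∫ ω, (S t ω - S0) ^ 2 ∂P) / t) (𝓝[>] 0) (𝓝 Q)) :
    A - 4 * Q / (n * (K - S0) ^ 2) ≤
        liminf (fun t => (∫ ω, max (S t ω - K) 0 ∂P) / t) (𝓝[>] (0:ℝ)) ∧
      liminf (fun t => (∫ ω, max (S t ω - K) 0 ∂P) / t) (𝓝[>] (0:ℝ)) ≤
        limsup (fun t => (∫ ω, max (S t ω - K) 0 ∂P) / t) (𝓝[>] (0:ℝ)) ∧
      limsup (fun t => (∫ ω, max (S t ω - K) 0 ∂P) / t) (𝓝[>] (0:ℝ)) ≤ A := by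
  have hKS : 0 < K - S0 := sub_pos.mpr hK
  have hn : (0 : ℝ) < n := (div_pos two_pos hKS).trans_le hn2
  have hband : 2 * (1 / n : ℝ) ≤ K - S0 := by
    rw [mul_one_div, div_le_iff₀ hn]
    rwa [div_le_iff₀ hKS, mul_comm] at hn2
  have hfS0 : f S0 = 0 := by
    rw [hf_eq S0 (by rw [abs_sub_comm, abs_of_pos hKS]; linarith), max_eq_right (by linarith)]
  rw [show 4 * Q / (n * (K - S0) ^ 2) = 4 * (1 / n) / (K - S0) ^ 2 * Q by field_simp]
  set c : ℝ := 4 * (1 / n) / (K - S0) ^ 2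
  have hf_quad := le_add_mul_sq_of_eq_off_band (by positivity) hband hf_le hf_eq
  simp only [hfS0, sub_zero] at hA
  have hS_int : ∀ t ∈ Set.Ioc (0:ℝ) T, Integrable (S t) P :=
    fun t ht => (hS_L2 t ht).integrable one_le_two
  have hf_int : ∀ t ∈ Set.Ioc (0:ℝ) T, Integrable (fun ω => f (S t ω)) P :=
    fun t ht => integrable_comp_of_call_le_of_le_call_add hf_meas (hS_int t ht) hf_ge hf_le
  refine le_liminf_and_liminf_le_limsup_and_limsup_le_of_tendsto (hA.sub (hQ.const_mul c)) hA
    ?_ ?_ <;> filter_upwards [Ioc_mem_nhdsGT hT] with t ht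
  · rw [← mul_div_assoc, ← sub_div]
    refine div_le_div_of_nonneg_right ?_ ht.1.le
    linarith [integral_comp_le_integral_call_add_mul_integral_sq (hS_L2 t ht) (hf_int t ht) hf_quad]
  · exact div_le_div_of_nonneg_right
      (integral_call_le_integral_comp (hS_int t ht) (hf_int t ht) hf_ge) ht.1.le

/-- Sandwich bounds for the short-time behavior of at-the-money
regularized call payoffs: if `(E[f(S_t)] − f(S₀))/t → A` and `E[(S_t − S₀)²]/t → Q`
as `t → 0⁺`, where `(x−K)⁺ ≤ f ≤ (x−K)⁺ + 1/n` and `f = (·−K)⁺` off a `1/n`-band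
around `K`, with `n ≥ 2/(K − S₀)`, then
`A − 4Q/(n(K−S₀)²) ≤ liminf (1/t)E[(S_t−K)⁺] ≤ limsup (1/t)E[(S_t−K)⁺] ≤ A`. -/
theorem liminf_limsup_call_sandwich
    {Ω : Type*} [MeasurableSpace Ω] (P : Measure Ω) [IsProbabilityMeasure P]
    {T : ℝ} (hT : 0 < T) (S : ℝ → Ω → ℝ) (S0 K : ℝ) (hS0 : 0 < S0) (hK : S0 < K)
    (hS_nonneg : ∀ t ∈ Set.Ioc (0:ℝ) T, ∀ᵐ ω ∂P, 0 ≤ S t ω)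
    (hS_L2 : ∀ t ∈ Set.Ioc (0:ℝ) T, MemLp (S t) 2 P)
    (n : ℕ) (hn : 0 < n) (hn2 : 2 / (K - S0) ≤ (n : ℝ))
    (f : ℝ → ℝ) (hf_meas : Measurable f)
    (hf_ge : ∀ x, max (x - K) 0 ≤ f x)
    (hf_le : ∀ x, f x ≤ max (x - K) 0 + 1 / n)
    (hf_eq : ∀ x, |x - K| > 1 / n → f x = max (x - K) 0)
    (A Q : ℝ)
    (hA : Tendsto (fun t => ((∫ ω, f (S t ω) ∂P) - f S0) / t) (𝓝[>] 0) (𝓝 A))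
    (hQ : Tendsto (fun t => (∫ ω, (S t ω - S0) ^ 2 ∂P) / t) (𝓝[>] 0) (𝓝 Q)) :
    A - 4 * Q / (n * (K - S0) ^ 2) ≤
        liminf (fun t => (∫ ω, max (S t ω - K) 0 ∂P) / t) (𝓝[>] (0:ℝ)) ∧
      liminf (fun t => (∫ ω, max (S t ω - K) 0 ∂P) / t) (𝓝[>] (0:ℝ)) ≤
        limsup (fun t => (∫ ω, max (S t ω - K) 0 ∂P) / t) (𝓝[>] (0:ℝ)) ∧
      limsup (fun t => (∫ ω, max (S t ω - K) 0 ∂P) / t) (𝓝[>] (0:ℝ)) ≤ A :=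
  liminf_limsup_call_sandwich_general P hT S S0 K hK hS_L2 n hn2 f hf_meas hf_ge hf_le hf_eq A Q hA
    hQ
end

section
/- Let Y and Z be independent integrable real random variables on a probability space with Y ≥ 0 almost surely, and let s₀ > 0. Then (Y Z − s₀)⁺ is integrable and |E[(Y Z − s₀)⁺] − s₀ E[(Y − 1)⁺]| ≤ E[Y] · E[|Z − s₀|]. -/
/-!
Pointwise, `s₀ (Y − 1)⁺ = (s₀ Y − s₀)⁺` because `s₀ > 0`, and `x ↦ x⁺` is 1-Lipschitz, so the
integrand `(Y Z − s₀)⁺ − s₀ (Y − 1)⁺` is bounded in absolute value by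
`|Y Z − s₀ Y| = Y |Z − s₀|`. Integrating, independence of `Y` and `|Z − s₀|` factors
`E[Y |Z − s₀|]` as `E[Y] E[|Z − s₀|]`.
-/

open MeasureTheory ProbabilityTheory

lemma abs_max_mul_sub_sub_mul_max_sub_one_le {y s : ℝ} (hy : 0 ≤ y) (hs : 0 ≤ s) (z : ℝ) :
    |max (y * z - s) 0 - s * max (y - 1) 0| ≤ y * |z - s| := by
  rw [mul_max_of_nonneg _ _ hs, mul_sub, mul_one, mul_zero]
  calc |max (y * z - s) 0 - max (s * y - s) 0|
      ≤ |(y * z - s) - (s * y - s)| := abs_max_sub_max_le_abs _ _ _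
    _ = y * |z - s| := by
      rw [sub_sub_sub_cancel_right, mul_comm s y, ← mul_sub, abs_mul, abs_of_nonneg hy]

lemma abs_integral_sub_integral_le_integral {α : Type*} [MeasurableSpace α] {μ : Measure α}
    {f g h : α → ℝ} (hf : Integrable f μ) (hg : Integrable g μ) (hh : Integrable h μ)
    (hfg : ∀ᵐ x ∂μ, |f x - g x| ≤ h x) :
    |∫ x, f x ∂μ - ∫ x, g x ∂μ| ≤ ∫ x, h x ∂μ := by
  rw [← integral_sub hf hg]
  exact abs_integral_le_integral_abs.trans (integral_mono_ae (hf.sub hg).abs hh hfg)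

/-- If `Y, Z` are independent integrable random variables with
`Y ≥ 0` a.s. and `s₀ > 0`, then `(YZ − s₀)⁺` is integrable and
`|E[(YZ − s₀)⁺] − s₀ E[(Y − 1)⁺]| ≤ E[Y] E[|Z − s₀|]`. -/
theorem integrable_and_abs_integral_product_call_le
    {Ω : Type*} [MeasurableSpace Ω] (P : Measure Ω) [IsProbabilityMeasure P]
    (Y Z : Ω → ℝ) (hY : Integrable Y P) (hZ : Integrable Z P)
    (hindep : ProbabilityTheory.IndepFun Y Z P)
    (hYpos : ∀ᵐ ω ∂P, 0 ≤ Y ω) (s0 : ℝ) (hs0 : 0 < s0) :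
    Integrable (fun ω => max (Y ω * Z ω - s0) 0) P ∧
      |(∫ ω, max (Y ω * Z ω - s0) 0 ∂P) - s0 * ∫ ω, max (Y ω - 1) 0 ∂P| ≤
        (∫ ω, Y ω ∂P) * ∫ ω, |Z ω - s0| ∂P := by
  have hcall : Integrable (fun ω => max (Y ω * Z ω - s0) 0) P :=
    ((hindep.integrable_mul hY hZ).sub (integrable_const s0)).pos_part
  refine ⟨hcall, ?_⟩
  have hdev : Integrable (fun ω => |Z ω - s0|) P := (hZ.sub (integrable_const s0)).abs
  have hindep_dev : IndepFun Y (fun ω => |Z ω - s0|) P :=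
    hindep.comp measurable_id (measurable_id.sub_const s0).abs
  rw [← hindep_dev.integral_fun_mul_eq_mul_integral hY.aestronglyMeasurable
    hdev.aestronglyMeasurable, ← integral_const_mul]
  refine abs_integral_sub_integral_le_integral hcall
    ((hY.sub (integrable_const 1)).pos_part.const_mul s0) (hindep_dev.integrable_mul hY hdev) ?_
  filter_upwards [hYpos] with ω hω
  exact abs_max_mul_sub_sub_mul_max_sub_one_le hω hs0.le (Z ω)
end

section
/- Let (Ω, F, ℙ) be a probability space, T > 0, ε > 0, and let δ : [0, T] × Ω → ℝ be jointly measurable with δ_s ≥ ε almost surely for every s ∈ [0, T] and E[∫₀ᵀ δ_s² ds] < ∞. Let δ₀ ≥ ε be a constant with E[|δ_s² − δ₀²|] → 0 as s → 0⁺, and let L be a nonnegative square-integrable random variable on Ω. Then E[ sqrt( (1/t) ∫₀ᵗ δ_s² ds ) · L ] → δ₀ E[L] as t → 0⁺. -/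
/-!
Write `A_t = t⁻¹ ∫₀ᵗ δ_s² ds`. By Tonelli, `E|A_t - δ₀²| ≤ t⁻¹ ∫₀ᵗ E|δ_s² - δ₀²| ds`, a running
average of a function tending to `0`, so `A_t → δ₀²` in `L¹`. The elementary inequality
`(√a - b)² ≤ |a - b²|` for `b ≥ 0` upgrades this to `√A_t → δ₀` in `L²`, and Cauchy–Schwarz
against `L ∈ L²` gives the claim.
-/

open MeasureTheory Filter Topology Function Set
open scoped ENNReal

theorem sqrt_sub_sq_le_abs_sub_sq (a : ℝ) {b : ℝ} (hb : 0 ≤ b) :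
    (√a - b) ^ 2 ≤ |a - b ^ 2| := by
  rcases le_or_gt 0 a with ha | ha
  · have hsq := Real.sq_sqrt ha
    have hs := Real.sqrt_nonneg a
    rcases le_total (√a) b with h | h
    · rw [abs_of_nonpos (by nlinarith)]; nlinarith
    · rw [abs_of_nonneg (by nlinarith)]; nlinarith
  · rw [Real.sqrt_eq_zero'.2 ha.le, abs_of_neg (by nlinarith)]; nlinarith

theorem ENNReal.tendsto_ofReal_inv_mul_setLIntegral_Ioc {g : ℝ → ℝ≥0∞}
    (hg : Tendsto g (𝓝[>] 0) (𝓝 0)) :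
    Tendsto (fun t => ENNReal.ofReal t⁻¹ * ∫⁻ s in Ioc 0 t, g s) (𝓝[>] 0) (𝓝 0) := by
  refine ENNReal.tendsto_nhds_zero.2 fun η hη => ?_
  obtain ⟨s₀, hs₀, hg_le⟩ := mem_nhdsGT_iff_exists_Ioo_subset.1 (hg (Iic_mem_nhds hη))
  filter_upwards [Ioo_mem_nhdsGT hs₀] with t ⟨ht0, hts₀⟩
  calc ENNReal.ofReal t⁻¹ * ∫⁻ s in Ioc 0 t, g s
      ≤ ENNReal.ofReal t⁻¹ * ∫⁻ _ in Ioc 0 t, η := by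
        gcongr 1
        exact setLIntegral_mono' measurableSet_Ioc fun s hs => hg_le ⟨hs.1, hs.2.trans_lt hts₀⟩
    _ = η := by
        rw [setLIntegral_const, Real.volume_Ioc, sub_zero, mul_comm η, ← mul_assoc,
          ← ENNReal.ofReal_mul (inv_nonneg.2 ht0.le), inv_mul_cancel₀ ht0.ne', ENNReal.ofReal_one,
          one_mul]

theorem enorm_inv_mul_intervalIntegral_sub_le {f : ℝ → ℝ} {t : ℝ} (c : ℝ) (ht : 0 < t)
    (hf : IntegrableOn f (Ioc 0 t)) :
    ‖t⁻¹ * (∫ s in 0..t, f s) - c‖ₑ ≤ ENNReal.ofReal t⁻¹ * ∫⁻ s in Ioc 0 t, ‖f s - c‖ₑ := by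
  have hsub : t⁻¹ * (∫ s in 0..t, f s) - c = t⁻¹ * ∫ s in 0..t, (f s - c) := by
    rw [intervalIntegral.integral_sub ((intervalIntegrable_iff_integrableOn_Ioc_of_le ht.le).2 hf)
      intervalIntegrable_const, intervalIntegral.integral_const, smul_eq_mul, sub_zero]
    field_simp
  rw [hsub, enorm_mul, Real.enorm_of_nonneg (inv_nonneg.2 ht.le),
    intervalIntegral.integral_of_le ht.le]
  gcongr
  exact enorm_integral_le_lintegral_enorm _

section

variable {Ω : Type*} [MeasurableSpace Ω] {μ : Measure Ω}

theorem MeasureTheory.StronglyMeasurable.intervalIntegral_prod_left {F : ℝ → Ω → ℝ}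
    (hF : StronglyMeasurable (uncurry F)) (a b : ℝ) :
    StronglyMeasurable fun ω => ∫ s in a..b, F s ω :=
  hF.integral_prod_left.sub hF.integral_prod_left

theorem eLpNorm_one_inv_mul_intervalIntegral_sub_le [IsFiniteMeasure μ] {t : ℝ} (ht : 0 < t)
    {F : ℝ → Ω → ℝ} (hF : Integrable (uncurry F) ((volume.restrict (Ioc 0 t)).prod μ)) (c : ℝ) :
    eLpNorm (fun ω => t⁻¹ * (∫ s in 0..t, F s ω) - c) 1 μ ≤
      ENNReal.ofReal t⁻¹ * ∫⁻ s in Ioc 0 t, ENNReal.ofReal (∫ ω, |F s ω - c| ∂μ) := by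
  have hF_enorm : AEMeasurable (uncurry fun s ω => ‖F s ω - c‖ₑ)
      ((volume.restrict (Ioc 0 t)).prod μ) :=
    (hF.aestronglyMeasurable.sub aestronglyMeasurable_const).enorm
  calc eLpNorm (fun ω => t⁻¹ * (∫ s in 0..t, F s ω) - c) 1 μ
      ≤ ∫⁻ ω, ENNReal.ofReal t⁻¹ * (∫⁻ s in Ioc 0 t, ‖F s ω - c‖ₑ) ∂μ := by
        rw [eLpNorm_one_eq_lintegral_enorm]
        refine lintegral_mono_ae ?_
        filter_upwards [hF.prod_left_ae] with ω hω
        exact enorm_inv_mul_intervalIntegral_sub_le c ht hω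
    _ = ENNReal.ofReal t⁻¹ * ∫⁻ s in Ioc 0 t, ∫⁻ ω, ‖F s ω - c‖ₑ ∂μ := by
        rw [lintegral_const_mul' _ _ ENNReal.ofReal_ne_top, lintegral_lintegral_swap hF_enorm]
    _ = ENNReal.ofReal t⁻¹ * ∫⁻ s in Ioc 0 t, ENNReal.ofReal (∫ ω, |F s ω - c| ∂μ) := by
        congr 1
        refine lintegral_congr_ae ?_
        filter_upwards [hF.prod_right_ae] with s hs
        have hs' : Integrable (fun ω => |F s ω - c|) μ := (hs.sub (integrable_const c)).abs
        simp only [ofReal_integral_eq_lintegral_ofReal hs' (ae_of_all _ fun _ => abs_nonneg _),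
          Real.enorm_eq_ofReal_abs]

theorem tendsto_eLpNorm_one_inv_mul_intervalIntegral_sub [IsFiniteMeasure μ] {T : ℝ}
    (hT : 0 < T) {F : ℝ → Ω → ℝ} (hF : Integrable (uncurry F) ((volume.restrict (Ioc 0 T)).prod μ))
    {c : ℝ}
    (hconv : Tendsto (fun s => ∫ ω, |F s ω - c| ∂μ) (𝓝[>] 0) (𝓝 0)) :
    Tendsto (fun t => eLpNorm (fun ω => t⁻¹ * (∫ s in 0..t, F s ω) - c) 1 μ) (𝓝[>] 0) (𝓝 0) := by
  have hg : Tendsto (fun s => ENNReal.ofReal (∫ ω, |F s ω - c| ∂μ)) (𝓝[>] 0) (𝓝 0) := by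
    simpa only [ENNReal.ofReal_zero] using ENNReal.tendsto_ofReal hconv
  refine tendsto_of_tendsto_of_tendsto_of_le_of_le' tendsto_const_nhds
    (ENNReal.tendsto_ofReal_inv_mul_setLIntegral_Ioc hg) (Eventually.of_forall fun _ => zero_le) ?_
  filter_upwards [Ioc_mem_nhdsGT hT] with t ⟨ht0, htT⟩
  exact eLpNorm_one_inv_mul_intervalIntegral_sub_le ht0
    (hF.mono_measure (Measure.prod_mono (Measure.restrict_mono (Ioc_subset_Ioc_right htT) le_rfl)
      le_rfl)) c

theorem eLpNorm_two_sqrt_sub_le (a : Ω → ℝ) {b : ℝ} (hb : 0 ≤ b) :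
    eLpNorm (fun ω => √(a ω) - b) 2 μ ≤ eLpNorm (fun ω => a ω - b ^ 2) 1 μ ^ (2⁻¹ : ℝ) := by
  rw [eLpNorm_eq_lintegral_rpow_enorm_toReal two_ne_zero ENNReal.ofNat_ne_top,
    eLpNorm_one_eq_lintegral_enorm, ENNReal.toReal_ofNat, one_div]
  gcongr with ω
  rw [Real.enorm_eq_ofReal_abs, Real.enorm_eq_ofReal_abs,
    ENNReal.ofReal_rpow_of_nonneg (abs_nonneg _) two_pos.le, Real.rpow_two, sq_abs]
  exact ENNReal.ofReal_le_ofReal (sqrt_sub_sq_le_abs_sub_sq (a ω) hb)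

theorem tendsto_integral_mul_of_tendsto_eLpNorm_sub {ι : Type*} {l : Filter ι}
    {Y : ι → Ω → ℝ} {y L : Ω → ℝ} (hY : ∀ i, AEStronglyMeasurable (Y i) μ) (hy : MemLp y 2 μ)
    (hL : MemLp L 2 μ) (hYy : Tendsto (fun i => eLpNorm (Y i - y) 2 μ) l (𝓝 0)) :
    Tendsto (fun i => ∫ ω, Y i ω * L ω ∂μ) l (𝓝 (∫ ω, y ω * L ω ∂μ)) := by
  rw [tendsto_iff_edist_tendsto_0]
  have hbound : Tendsto (fun i => eLpNorm (Y i - y) 2 μ * eLpNorm L 2 μ) l (𝓝 0) := by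
    simpa using ENNReal.Tendsto.mul_const hYy (Or.inr hL.eLpNorm_ne_top)
  refine tendsto_of_tendsto_of_tendsto_of_le_of_le' tendsto_const_nhds hbound
    (Eventually.of_forall fun _ => zero_le) ?_
  filter_upwards [hYy.eventually (gt_mem_nhds ENNReal.zero_lt_top)] with i hi
  have hYy_mem : MemLp (Y i - y) 2 μ := ⟨(hY i).sub hy.1, hi⟩
  calc edist (∫ ω, Y i ω * L ω ∂μ) (∫ ω, y ω * L ω ∂μ)
      = ‖∫ ω, (Y i - y) ω * L ω ∂μ‖ₑ := by
        rw [edist_eq_enorm_sub, ← integral_sub]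
        · simp only [Pi.sub_apply, sub_mul]
        · exact (sub_add_cancel (Y i) y ▸ (hYy_mem.add hy).integrable_mul hL :)
        · exact hy.integrable_mul hL
    _ ≤ eLpNorm (fun ω => (Y i - y) ω * L ω) 1 μ := by
        rw [eLpNorm_one_eq_lintegral_enorm]; exact enorm_integral_le_lintegral_enorm _
    _ ≤ eLpNorm (Y i - y) 2 μ * eLpNorm L 2 μ := by
        simpa using eLpNorm_le_eLpNorm_mul_eLpNorm'_of_norm (p := 2) (q := 2) (r := 1)
          hYy_mem.1 hL.1 (· * ·) 1 (ae_of_all _ fun _ => by simp [norm_mul])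

end

theorem tendsto_integral_sqrt_average_mul_general
    {Ω : Type*} [MeasurableSpace Ω] (P : Measure Ω) [IsProbabilityMeasure P]
    {T ε : ℝ} (hT : 0 < T) (hε : 0 < ε)
    (δ : ℝ → Ω → ℝ) (hδ_meas : Measurable (Function.uncurry δ))
    (hδ_int : ∫⁻ ω, (∫⁻ s in Set.Ioc (0:ℝ) T, ENNReal.ofReal ((δ s ω) ^ 2)) ∂P < ⊤)
    (δ0 : ℝ) (hδ0 : ε ≤ δ0)
    (hconv : Tendsto (fun s => ∫ ω, |(δ s ω) ^ 2 - δ0 ^ 2| ∂P) (𝓝[>] 0) (𝓝 0))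
    (L : Ω → ℝ) (hL2 : MemLp L 2 P) :
    Tendsto (fun t => ∫ ω, Real.sqrt ((1 / t) * ∫ s in (0:ℝ)..t, (δ s ω) ^ 2) * L ω ∂P)
      (𝓝[>] 0) (𝓝 (δ0 * ∫ ω, L ω ∂P)) := by
  have hδ_sq : Measurable (uncurry fun s ω => δ s ω ^ 2) := hδ_meas.pow_const 2
  have hF : Integrable (uncurry fun s ω => δ s ω ^ 2) ((volume.restrict (Ioc 0 T)).prod P) := by
    refine ⟨hδ_sq.aestronglyMeasurable, ?_⟩
    rw [HasFiniteIntegral, lintegral_prod_symm _ hδ_sq.enorm.aemeasurable]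
    simpa only [uncurry_apply_pair, Real.enorm_of_nonneg (sq_nonneg _)] using hδ_int
  have hsq_L1 := tendsto_eLpNorm_one_inv_mul_intervalIntegral_sub hT hF hconv
  have hsqrt_L2 : Tendsto (fun t => eLpNorm (fun ω => √(t⁻¹ * ∫ s in 0..t, δ s ω ^ 2) - δ0) 2 P)
      (𝓝[>] 0) (𝓝 0) := by
    refine tendsto_of_tendsto_of_tendsto_of_le_of_le tendsto_const_nhds ?_ (fun _ => zero_le)
      (fun t => eLpNorm_two_sqrt_sub_le _ (hε.le.trans hδ0))
    exact (ENNReal.continuous_rpow_const.tendsto' 0 0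
      (ENNReal.zero_rpow_of_pos (by norm_num))).comp hsq_L1
  have hmeas (t : ℝ) : AEStronglyMeasurable (fun ω => √(t⁻¹ * ∫ s in 0..t, δ s ω ^ 2)) P :=
    have hI := (hδ_sq.stronglyMeasurable.intervalIntegral_prod_left 0 t).measurable
    (hI.const_mul t⁻¹).sqrt.aestronglyMeasurable
  simpa [one_div, integral_const_mul] using
    tendsto_integral_mul_of_tendsto_eLpNorm_sub hmeas (memLp_const δ0) hL2 hsqrt_L2

/-- If `δ : [0,T] × Ω → ℝ` is jointly measurable, `δ_s ≥ ε > 0` a.s.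
for every `s ∈ [0,T]`, `E[∫₀ᵀ δ_s² ds] < ∞`, `δ₀ ≥ ε` is a constant with
`E[|δ_s² − δ₀²|] → 0` as `s → 0⁺`, and `L ≥ 0` is square-integrable, then
`E[ √((1/t) ∫₀ᵗ δ_s² ds) · L ] → δ₀ E[L]` as `t → 0⁺`. -/
theorem tendsto_integral_sqrt_average_mul
    {Ω : Type*} [MeasurableSpace Ω] (P : Measure Ω) [IsProbabilityMeasure P]
    {T ε : ℝ} (hT : 0 < T) (hε : 0 < ε)
    (δ : ℝ → Ω → ℝ) (hδ_meas : Measurable (Function.uncurry δ))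
    (hδ_ge : ∀ s ∈ Set.Icc (0:ℝ) T, ∀ᵐ ω ∂P, ε ≤ δ s ω)
    (hδ_int : ∫⁻ ω, (∫⁻ s in Set.Ioc (0:ℝ) T, ENNReal.ofReal ((δ s ω) ^ 2)) ∂P < ⊤)
    (δ0 : ℝ) (hδ0 : ε ≤ δ0)
    (hconv : Tendsto (fun s => ∫ ω, |(δ s ω) ^ 2 - δ0 ^ 2| ∂P) (𝓝[>] 0) (𝓝 0))
    (L : Ω → ℝ) (hL_nonneg : ∀ᵐ ω ∂P, 0 ≤ L ω) (hL2 : MemLp L 2 P) :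
    Tendsto (fun t => ∫ ω, Real.sqrt ((1 / t) * ∫ s in (0:ℝ)..t, (δ s ω) ^ 2) * L ω ∂P)
      (𝓝[>] 0) (𝓝 (δ0 * ∫ ω, L ω ∂P)) :=
  tendsto_integral_sqrt_average_mul_general P hT hε δ hδ_meas hδ_int δ0 hδ0 hconv L hL2
end
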